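/- arXiv:1502.03691 — 6 statements merged into one kernel-verified Lean document; each statement's English description precedes it below -/
import Mathlib

section
/- Let R be a commutative ring with nonzero identity and I a nonzero ideal of R with √I ≠ I. If the zero-divisor graph Γ(R/I) has at least 2 vertices, then the ideal-based zero-divisor graph Γ_I(R) is not complemented. -/
open Ideal Polynomial

-- The zero-divisor graph Γ(S): vertices are the nonzero zero-divisors,
-- distinct vertices adjacent iff their product is zero.  We realize it as a
-- graph on the whole ring whose adjacency relation encodes vertexhood.
def zdVertexSet (S : Type*) [CommRing S] : Set S :=
  {x | x ≠ 0 ∧ ∃ y, y ≠ 0 ∧ x * y = 0}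

def zdGraph (S : Type*) [CommRing S] : SimpleGraph S where
  Adj x y := x ≠ y ∧ x ≠ 0 ∧ y ≠ 0 ∧ x * y = 0
  symm := ⟨fun x y ⟨h1, h2, h3, h4⟩ => ⟨h1.symm, h3, h2, by rwa [mul_comm]⟩⟩
  loopless := ⟨fun x h => h.1 rfl⟩

-- The ideal-based zero-divisor graph Γ_I(R):
-- vertices {x ∈ R \ I : ∃ y ∈ R \ I, x*y ∈ I}, distinct x,y adjacent iff x*y ∈ I.
def idealVertexSet {R : Type*} [CommRing R] (I : Ideal R) : Set R :=
  {x | x ∉ I ∧ ∃ y, y ∉ I ∧ x * y ∈ I}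

def idealGraph {R : Type*} [CommRing R] (I : Ideal R) : SimpleGraph R where
  Adj x y := x ≠ y ∧ x ∉ I ∧ y ∉ I ∧ x * y ∈ I
  symm := ⟨fun x y ⟨h1, h2, h3, h4⟩ => ⟨h1.symm, h3, h2, by rwa [mul_comm]⟩⟩
  loopless := ⟨fun x h => h.1 rfl⟩

-- a ⊥ b : a and b are adjacent and no vertex is adjacent to both.
def Orth {V : Type*} (G : SimpleGraph V) (a b : V) : Prop :=
  G.Adj a b ∧ ∀ c, ¬(G.Adj a c ∧ G.Adj b c)

-- a ~ b : a and b are nonadjacent with exactly the same neighbors.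
def Sim {V : Type*} (G : SimpleGraph V) (a b : V) : Prop :=
  ¬G.Adj a b ∧ ∀ c, G.Adj a c ↔ G.Adj b c

-- A graph (with specified vertex set S) is complemented if every vertex has an
-- orthogonal partner.
def Complemented {V : Type*} (G : SimpleGraph V) (S : Set V) : Prop :=
  ∀ a ∈ S, ∃ b ∈ S, Orth G a b

def UniquelyComplemented {V : Type*} (G : SimpleGraph V) (S : Set V) : Prop :=
  Complemented G S ∧ ∀ a b c, Orth G a b → Orth G a c → Sim G b c

/-!
Pick `x ∉ I` with `x² ∈ I` (possible since `I` is not radical) and an orthogonal partner `b` of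
`x` in `Γ_I(R)`. If `b ≢ x (mod I)`, then `x + i` for any nonzero `i ∈ I` is a common neighbour
of `x` and `b`; so `b ≡ x`, and then every `z ∉ I` with `zx ∈ I` must be `≡ x` as well, since
otherwise `z` is a common neighbour. Hence the annihilator of `x̄` in `R/I` is `{0, x̄}`, and
because `x̄² = 0` this forces `x̄` to be the only vertex of `Γ(R/I)`.
-/

theorem Ideal.exists_notMem_mul_self_mem_of_radical_ne {R : Type*} [CommRing R] {I : Ideal R}
    (h : I.radical ≠ I) : ∃ x ∉ I, x * x ∈ I := by
  have hnred : ¬ IsReduced (R ⧸ I) := by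
    rwa [← isRadical_iff_quotient_reduced, ← radical_eq_iff]
  rw [isReduced_iff_pow_one_lt 2 one_lt_two] at hnred
  push Not at hnred
  obtain ⟨y, hy2, hy0⟩ := hnred
  obtain ⟨x, rfl⟩ := Quotient.mk_surjective y
  refine ⟨x, fun hx => hy0 (Quotient.eq_zero_iff_mem.2 hx), ?_⟩
  rw [← Quotient.eq_zero_iff_mem, map_mul, ← sq, hy2]

section idealGraph

variable {R : Type*} [CommRing R] {I : Ideal R} {x b : R}

theorem sub_mem_of_orth_idealGraph (hI : I ≠ ⊥) (hxx : x * x ∈ I)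
    (h : Orth (idealGraph I) x b) : b - x ∈ I := by
  obtain ⟨⟨-, hxI, hbI, hxb⟩, hnocommon⟩ := h
  by_contra hbx
  obtain ⟨i, hiI, hi0⟩ := Submodule.exists_mem_ne_zero_of_ne_bot hI
  have hxiI : x + i ∉ I := fun h => hxI (by simpa using I.sub_mem h hiI)
  refine hnocommon (x + i) ⟨⟨?_, hxI, hxiI, ?_⟩, ⟨?_, hbI, hxiI, ?_⟩⟩
  · simpa using hi0
  · rw [mul_add]
    exact I.add_mem hxx (I.mul_mem_left x hiI)
  · rintro rfl
    exact hbx (by simpa using hiI)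
  · rw [mul_add, mul_comm]
    exact I.add_mem hxb (I.mul_mem_left b hiI)

theorem sub_mem_of_orth_idealGraph_of_mul_mem (h : Orth (idealGraph I) x b) (hbx : b - x ∈ I)
    {z : R} (hzI : z ∉ I) (hzx : z * x ∈ I) : z - x ∈ I := by
  obtain ⟨⟨-, hxI, hbI, -⟩, hnocommon⟩ := h
  by_contra hzx'
  refine hnocommon z ⟨⟨?_, hxI, hzI, by rwa [mul_comm]⟩, ⟨?_, hbI, hzI, ?_⟩⟩
  · rintro rfl
    simp at hzx'
  · rintro rfl
    exact hzx' hbx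
  · have hbz : b * z = (b - x) * z + z * x := by ring
    rw [hbz]
    exact I.add_mem (I.mul_mem_right z hbx) hzx

end idealGraph

theorem zdVertexSet_subset_singleton {S : Type*} [CommRing S] {x : S} (hx : x ≠ 0)
    (hxx : x * x = 0) (hann : ∀ z, z * x = 0 → z = 0 ∨ z = x) : zdVertexSet S ⊆ {x} := by
  have hmul : ∀ r, r ≠ 0 → r ≠ x → x * r = x := by
    intro r hr0 hrx
    rcases hann (x * r) (by rw [mul_right_comm, hxx, zero_mul]) with h | h
    · rcases hann r (by rwa [mul_comm]) with h' | h'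
      · exact absurd h' hr0
      · exact absurd h' hrx
    · exact h
  rintro w ⟨hw0, s, hs0, hws⟩
  by_contra hwx
  have hxw : x * w = x := hmul w hw0 hwx
  by_cases hsx : s = x
  · subst hsx
    exact hx (by rw [← hxw, mul_comm, hws])
  · exact hx (by rw [← hmul s hs0 hsx, ← hxw, mul_assoc, hws, mul_zero])

theorem stmt0_general {R : Type*} [CommRing R] (I : Ideal R)
    (hI0 : I ≠ ⊥) (hrad : I.radical ≠ I)
    (h2 : (zdVertexSet (R ⧸ I)).Nontrivial) :
    ¬ Complemented (idealGraph I) (idealVertexSet I) := by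
  intro hcomp
  obtain ⟨x, hxI, hxx⟩ := exists_notMem_mul_self_mem_of_radical_ne hrad
  obtain ⟨b, -, hb⟩ := hcomp x ⟨hxI, x, hxI, hxx⟩
  have hbx := sub_mem_of_orth_idealGraph hI0 hxx hb
  refine h2.not_subset_singleton
    (zdVertexSet_subset_singleton (x := Ideal.Quotient.mk I x) ?_ ?_ ?_)
  · rwa [Ne, Ideal.Quotient.eq_zero_iff_mem]
  · rwa [← map_mul, Ideal.Quotient.eq_zero_iff_mem]
  · intro z hz
    obtain ⟨z, rfl⟩ := Ideal.Quotient.mk_surjective z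
    rw [← map_mul, Ideal.Quotient.eq_zero_iff_mem] at hz
    rw [Ideal.Quotient.eq_zero_iff_mem, Ideal.Quotient.eq]
    by_cases hzI : z ∈ I
    · exact Or.inl hzI
    · exact Or.inr (sub_mem_of_orth_idealGraph_of_mul_mem hb hbx hzI hz)

theorem stmt0 {R : Type*} [CommRing R] [Nontrivial R] (I : Ideal R)
    (hI0 : I ≠ ⊥) (hrad : I.radical ≠ I)
    (h2 : (zdVertexSet (R ⧸ I)).Nontrivial) :
    ¬ Complemented (idealGraph I) (idealVertexSet I) :=
  stmt0_general I hI0 hrad h2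
end

section
/- Let R be a commutative ring with nonzero identity and I a proper ideal of R. If the zero-divisor graph Γ(R/I) is isomorphic to the complete graph K^1 (i.e., has exactly one vertex), then Γ_I(R) is isomorphic to the complete graph on |I| vertices. -/
open Ideal Polynomial

/-! A unique nonzero zero-divisor `a` of `R ⧸ I` must annihilate itself, so `a² = 0`. The vertices
of `Γ_I(R)` are exactly the lifts of nonzero zero-divisors of `R ⧸ I`, i.e. the coset `x₀ + I` of a
lift `x₀` of `a`, and any two of them multiply into `I`; so `Γ_I(R)` is complete on a set in
bijection with `I`. -/

theorem mul_self_eq_zero_of_zdVertexSet_eq_singleton {S : Type*} [CommRing S] {a : S}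
    (h : zdVertexSet S = {a}) : a * a = 0 := by
  obtain ⟨ha0, y, hy0, hay⟩ : a ∈ zdVertexSet S := h ▸ rfl
  have hya : y ∈ zdVertexSet S := ⟨hy0, a, ha0, by rwa [mul_comm]⟩
  rw [h, Set.mem_singleton_iff] at hya
  rwa [hya] at hay

section

variable {R : Type*} [CommRing R] (I : Ideal R)

theorem mem_idealVertexSet_iff_mk_mem_zdVertexSet (x : R) :
    x ∈ idealVertexSet I ↔ Ideal.Quotient.mk I x ∈ zdVertexSet (R ⧸ I) := by
  change (_ ∧ _) ↔ (_ ∧ _)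
  rw [Ideal.Quotient.mk_surjective.exists]
  simp only [ne_eq, ← map_mul, Quotient.eq_zero_iff_mem]

theorem idealVertexSet_eq_fiber_of_zdVertexSet_eq_singleton {a : R ⧸ I}
    (h : zdVertexSet (R ⧸ I) = {a}) : idealVertexSet I = {x | Ideal.Quotient.mk I x = a} :=
  Set.ext fun x => (mem_idealVertexSet_iff_mk_mem_zdVertexSet I x).trans (by rw [h]; rfl)

theorem isClique_idealGraph_fiber {a : R ⧸ I} (ha0 : a ≠ 0) (haa : a * a = 0) :
    (idealGraph I).IsClique {x | Ideal.Quotient.mk I x = a} := by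
  intro x (hx : _ = a) y (hy : _ = a) hxy
  refine ⟨hxy, ?_, ?_, ?_⟩ <;> rw [← Quotient.eq_zero_iff_mem]
  · rwa [hx]
  · rwa [hy]
  · rwa [map_mul, hx, hy]

def idealEquivFiber (x₀ : R) : I ≃ {x | Ideal.Quotient.mk I x = Ideal.Quotient.mk I x₀} :=
  (Equiv.addLeft x₀).subtypeEquiv fun i => by simp [Quotient.eq_zero_iff_mem]

end

theorem stmt1_general {R : Type*} [CommRing R] (I : Ideal R)
    (h1 : ∃ a : R ⧸ I, zdVertexSet (R ⧸ I) = {a}) :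
    Nonempty ((SimpleGraph.induce (idealVertexSet I) (idealGraph I)) ≃g
      (⊤ : SimpleGraph I)) := by
  obtain ⟨a, ha⟩ := h1
  have ha0 : a ≠ 0 := (ha ▸ Set.mem_singleton a : a ∈ zdVertexSet _).1
  obtain ⟨x₀, rfl⟩ := Ideal.Quotient.mk_surjective a
  have hclique := isClique_idealGraph_fiber I ha0 (mul_self_eq_zero_of_zdVertexSet_eq_singleton ha)
  rw [idealVertexSet_eq_fiber_of_zdVertexSet_eq_singleton I ha, SimpleGraph.induce_eq_top.2 hclique]
  exact ⟨.completeGraph (idealEquivFiber I x₀).symm⟩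

theorem stmt1 {R : Type*} [CommRing R] [Nontrivial R] (I : Ideal R) (hI : I ≠ ⊤)
    (h1 : ∃ a : R ⧸ I, zdVertexSet (R ⧸ I) = {a}) :
    Nonempty ((SimpleGraph.induce (idealVertexSet I) (idealGraph I)) ≃g
      (⊤ : SimpleGraph I)) :=
  stmt1_general I h1
end

section
/- Let R be a commutative ring with nonzero identity and I a radical ideal of R (√I = I). For vertices x, y of Γ_I(R): x ⊥ y in Γ_I(R) if and only if x + I ⊥ y + I in Γ(R/I). -/
open Ideal Polynomial

theorem orth_comap_iff {V W : Type*} {G : SimpleGraph W} {f : V → W}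
    (hf : Function.Surjective f) {a b : V} :
    Orth (G.comap f) a b ↔ Orth G (f a) (f b) := by
  simp only [Orth, SimpleGraph.comap_adj, hf.forall]

/-- Since `R ⧸ I` is reduced, `a * a ∈ I` forces `a ∈ I`: distinct adjacent vertices of
`Γ_I(R)` never collapse to a single vertex of `Γ(R ⧸ I)`. -/
theorem idealGraph_eq_comap_quotient {R : Type*} [CommRing R] {I : Ideal R}
    (hI : I.IsRadical) :
    idealGraph I = (zdGraph (R ⧸ I)).comap (Ideal.Quotient.mk I) := by
  have : IsReduced (R ⧸ I) := (Ideal.isRadical_iff_quotient_reduced I).mp hI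
  ext a b
  simp only [SimpleGraph.comap_adj, idealGraph, zdGraph, ne_eq, ← map_mul,
    Ideal.Quotient.eq_zero_iff_mem]
  refine ⟨fun ⟨_, ha, hb, hab⟩ => ⟨fun h => ha ?_, ha, hb, hab⟩,
    fun ⟨hne, ha, hb, hab⟩ => ⟨fun h => hne (h ▸ rfl), ha, hb, hab⟩⟩
  rw [← Ideal.Quotient.eq_zero_iff_mem]
  refine IsReduced.eq_zero _ ⟨2, ?_⟩
  rw [pow_two]
  nth_rw 2 [h]
  rw [← map_mul, Ideal.Quotient.eq_zero_iff_mem]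
  exact hab

theorem stmt5_general {R : Type*} [CommRing R] (I : Ideal R)
    (hrad : I.radical = I) (x y : R) :
    Orth (idealGraph I) x y ↔
      Orth (zdGraph (R ⧸ I)) (Ideal.Quotient.mk I x) (Ideal.Quotient.mk I y) := by
  rw [idealGraph_eq_comap_quotient (Ideal.radical_eq_iff.mp hrad)]
  exact orth_comap_iff Ideal.Quotient.mk_surjective

theorem stmt5 {R : Type*} [CommRing R] [Nontrivial R] (I : Ideal R)
    (hrad : I.radical = I) (x y : R)
    (hx : x ∈ idealVertexSet I) (hy : y ∈ idealVertexSet I) :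
    Orth (idealGraph I) x y ↔
      Orth (zdGraph (R ⧸ I)) (Ideal.Quotient.mk I x) (Ideal.Quotient.mk I y) :=
  stmt5_general I hrad x y
end

section
/- Let R be a commutative ring with nonzero identity and I a radical ideal of R. Then Γ_I(R) is complemented if and only if Γ_I(R) is uniquely complemented. -/
open Ideal Polynomial

/-!
Write `ann_I(a) = {x | xa ∈ I}`. If `a ⊥ b` and `I` is radical, then `ann_I(a) ∩ ann_I(b) ⊆ I`:
an element of it outside `I` would be a common neighbour of `a` and `b`, or, if it equals `a`
or `b`, would square into `I`. So if also `a ⊥ c`, any `x ∈ ann_I(b)` has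
`xc ∈ ann_I(a) ∩ ann_I(b) ⊆ I`; by symmetry `ann_I(b) = ann_I(c)`, which is `b ∼ c` (with
`bc ∉ I`, since otherwise `b² ∈ I`). Thus complemented implies uniquely complemented directly,
without passing through von Neumann regularity.
-/

theorem Ideal.IsRadical.mem_of_mul_self_mem {R : Type*} [CommRing R] {I : Ideal R} {x : R}
    (hI : I.IsRadical) (hx : x * x ∈ I) : x ∈ I :=
  hI ⟨2, by rwa [pow_two]⟩

namespace idealGraph

variable {R : Type*} [CommRing R] {I : Ideal R} {a b c x : R}

theorem mem_of_mul_mem_of_orth (hI : I.IsRadical) (hab : Orth (idealGraph I) a b)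
    (hxa : x * a ∈ I) (hxb : x * b ∈ I) : x ∈ I := by
  obtain ⟨⟨-, haI, hbI, -⟩, hno⟩ := hab
  by_contra hxI
  rcases eq_or_ne x a with rfl | hxa'
  · exact hxI (hI.mem_of_mul_self_mem hxa)
  rcases eq_or_ne x b with rfl | hxb'
  · exact hxI (hI.mem_of_mul_self_mem hxb)
  exact hno x ⟨⟨hxa'.symm, haI, hxI, by rwa [mul_comm]⟩, ⟨hxb'.symm, hbI, hxI, by rwa [mul_comm]⟩⟩

theorem mul_mem_of_orth (hI : I.IsRadical) (hab : Orth (idealGraph I) a b) (hac : a * c ∈ I)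
    (hxb : x * b ∈ I) : x * c ∈ I :=
  mem_of_mul_mem_of_orth hI hab
    (by rw [mul_assoc, mul_comm c]; exact I.mul_mem_left x hac)
    (by rw [mul_right_comm]; exact I.mul_mem_right c hxb)

theorem mul_notMem_of_orth_of_orth (hI : I.IsRadical) (hab : Orth (idealGraph I) a b)
    (hac : Orth (idealGraph I) a c) : b * c ∉ I := fun hbc =>
  hab.1.2.2.1 <| hI.mem_of_mul_self_mem <| mul_mem_of_orth hI hac hab.1.2.2.2 hbc

theorem adj_of_orth_of_orth (hI : I.IsRadical) (hab : Orth (idealGraph I) a b)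
    (hac : Orth (idealGraph I) a c) (hbx : (idealGraph I).Adj b x) : (idealGraph I).Adj c x := by
  obtain ⟨-, -, hxI, hbxI⟩ := hbx
  refine ⟨?_, hac.1.2.2.1, hxI, ?_⟩
  · rintro rfl
    exact mul_notMem_of_orth_of_orth hI hab hac hbxI
  · rw [mul_comm] at hbxI ⊢
    exact mul_mem_of_orth hI hab hac.1.2.2.2 hbxI

theorem sim_of_orth_of_orth (hI : I.IsRadical) (hab : Orth (idealGraph I) a b)
    (hac : Orth (idealGraph I) a c) : Sim (idealGraph I) b c :=
  ⟨fun hbc => mul_notMem_of_orth_of_orth hI hab hac hbc.2.2.2,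
    fun _ => ⟨adj_of_orth_of_orth hI hab hac, adj_of_orth_of_orth hI hac hab⟩⟩

end idealGraph

theorem stmt8_general {R : Type*} [CommRing R] (I : Ideal R)
    (hrad : I.radical = I) :
    Complemented (idealGraph I) (idealVertexSet I) ↔
      UniquelyComplemented (idealGraph I) (idealVertexSet I) :=
  ⟨fun hc => ⟨hc, fun _ _ _ => idealGraph.sim_of_orth_of_orth (radical_eq_iff.mp hrad)⟩,
    And.left⟩

theorem stmt8 {R : Type*} [CommRing R] [Nontrivial R] (I : Ideal R)
    (hrad : I.radical = I) :
    Complemented (idealGraph I) (idealVertexSet I) ↔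
      UniquelyComplemented (idealGraph I) (idealVertexSet I) :=
  stmt8_general I hrad
end

section
/- Let R be a commutative ring with nonzero identity and I a proper radical ideal of R. Then Γ_I(R) is complemented if and only if Γ(R/I) is complemented. -/
open Ideal Polynomial

/-! The quotient map `R → R ⧸ I` is surjective and carries the vertices of `Γ_I(R)` exactly onto
those of `Γ(R ⧸ I)`. Because `I` is radical it also preserves and reflects adjacency: two
adjacent vertices of `Γ_I(R)` never have the same image, since `x * x ∈ I` forces `x ∈ I`.
Orthogonality, and hence complementedness, transfers along any such map. -/

section Graph

variable {V W : Type*} {G : SimpleGraph V} {H : SimpleGraph W} {f : V → W}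

theorem orth_iff_of_surjective (hf : f.Surjective) (hadj : ∀ x y, G.Adj x y ↔ H.Adj (f x) (f y))
    (a b : V) : Orth G a b ↔ Orth H (f a) (f b) := by
  simp only [Orth, hadj, hf.forall]

theorem complemented_iff_of_surjective {S : Set V} {T : Set W} (hf : f.Surjective)
    (hadj : ∀ x y, G.Adj x y ↔ H.Adj (f x) (f y)) (hS : ∀ x, x ∈ S ↔ f x ∈ T) :
    Complemented G S ↔ Complemented H T := by
  simp only [Complemented, hf.forall, hf.exists, ← hS, orth_iff_of_surjective hf hadj]

end Graph

theorem zdGraph_adj_iff_of_isReduced {S : Type*} [CommRing S] [IsReduced S] {x y : S} :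
    (zdGraph S).Adj x y ↔ x ≠ 0 ∧ y ≠ 0 ∧ x * y = 0 := by
  refine ⟨fun h => h.2, fun h => ⟨?_, h⟩⟩
  rintro rfl
  exact h.1 (IsReduced.eq_zero x ⟨2, by rw [pow_two]; exact h.2.2⟩)

section IdealGraph

variable {R : Type*} [CommRing R] {I : Ideal R}

theorem mem_idealVertexSet_iff {x : R} :
    x ∈ idealVertexSet I ↔ Ideal.Quotient.mk I x ∈ zdVertexSet (R ⧸ I) := by
  simp only [idealVertexSet, zdVertexSet, Set.mem_ofPred_eq, ne_eq,
    Ideal.Quotient.mk_surjective.exists, ← map_mul, Ideal.Quotient.eq_zero_iff_mem]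

theorem idealGraph_adj_iff (hI : I.IsRadical) {x y : R} :
    (idealGraph I).Adj x y ↔
      (zdGraph (R ⧸ I)).Adj (Ideal.Quotient.mk I x) (Ideal.Quotient.mk I y) := by
  have := (isRadical_iff_quotient_reduced I).1 hI
  simp only [zdGraph_adj_iff_of_isReduced, ne_eq, ← map_mul, Ideal.Quotient.eq_zero_iff_mem]
  refine ⟨fun h => h.2, fun h => ⟨?_, h⟩⟩
  rintro rfl
  exact h.1 (hI ⟨2, by rw [pow_two]; exact h.2.2⟩)

end IdealGraph

theorem stmt11_general {R : Type*} [CommRing R] (I : Ideal R)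
    (hrad : I.radical = I) :
    Complemented (idealGraph I) (idealVertexSet I) ↔
      Complemented (zdGraph (R ⧸ I)) (zdVertexSet (R ⧸ I)) :=
  complemented_iff_of_surjective Ideal.Quotient.mk_surjective
    (fun _ _ => idealGraph_adj_iff (radical_eq_iff.1 hrad)) fun _ => mem_idealVertexSet_iff

theorem stmt11 {R : Type*} [CommRing R] [Nontrivial R] (I : Ideal R)
    (hI : I ≠ ⊤) (hrad : I.radical = I) :
    Complemented (idealGraph I) (idealVertexSet I) ↔
      Complemented (zdGraph (R ⧸ I)) (zdVertexSet (R ⧸ I)) :=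
  stmt11_general I hrad
end

section
/- Let R be a commutative ring with nonzero identity and I a proper ideal of R. Then the number of vertices of Γ_I(R) equals |I| times the number of vertices of Γ(R/I). -/
open Ideal Polynomial

/-! Membership in `Γ_I(R)` depends only on the residue class modulo `I`, so its vertex set is the
preimage of the vertex set of `Γ(R/I)`; each fibre of `R → R/I` is a coset of `I`. -/

theorem Cardinal.mk_preimage_quotient_mk {R : Type*} [Ring R] (I : Ideal R) [I.IsTwoSided]
    (t : Set (R ⧸ I)) :
    Cardinal.mk (Ideal.Quotient.mk I ⁻¹' t) = Cardinal.mk I * Cardinal.mk t := by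
  rw [← Cardinal.lift_id (Cardinal.mk I), ← Cardinal.lift_id (Cardinal.mk t), ← Cardinal.mk_prod]
  exact Cardinal.mk_congr (QuotientAddGroup.preimageMkEquivAddSubgroupProdSet I.toAddSubgroup t)

theorem idealVertexSet_eq_preimage_zdVertexSet {R : Type*} [CommRing R] (I : Ideal R) :
    idealVertexSet I = Ideal.Quotient.mk I ⁻¹' zdVertexSet (R ⧸ I) := by
  ext x
  simp only [idealVertexSet, zdVertexSet, Set.mem_preimage, Set.mem_ofPred_eq, ne_eq,
    Ideal.Quotient.eq_zero_iff_mem, Ideal.Quotient.mk_surjective.exists, ← map_mul]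

theorem stmt14_general {R : Type*} [CommRing R] (I : Ideal R) :
    Cardinal.mk (idealVertexSet I) =
      Cardinal.mk I * Cardinal.mk (zdVertexSet (R ⧸ I)) := by
  rw [idealVertexSet_eq_preimage_zdVertexSet, Cardinal.mk_preimage_quotient_mk]

theorem stmt14 {R : Type*} [CommRing R] [Nontrivial R] (I : Ideal R) (hI : I ≠ ⊤) :
    Cardinal.mk (idealVertexSet I) =
      Cardinal.mk I * Cardinal.mk (zdVertexSet (R ⧸ I)) :=
  stmt14_general I
end
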